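/- Let γ > 0, σ, z ∈ ℝ, k₂ > 0, V ≥ 0, u ∈ ℝ, f, m, k₁ ∈ ℝ. Then sup over (α⁰, α¹) ∈ ℝ² of [ f + z·α⁰ − (α⁰)²/2 + z·k₁·m − γ·z²·σ²/2 + (1/γ)(1 − exp(−γ(u + α¹)))·exp(−k₂·α¹)·V ] equals f + z²/2 − γσ²z²/2 + z·k₁·m + (1/(γ + k₂))·((γ + k₂)/k₂)^(−k₂/γ)·exp(k₂·u)·V, attained at α⁰ = z and α¹ = (1/γ)log(1 + γ/k₂) − u. -/

import Mathlib

open Real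

private lemma key_ineq {γ k₂ : ℝ} (hγ : 0 < γ) (hk : 0 < k₂) (x : ℝ) :
    (1 / γ) * (Real.exp (-(k₂ * x)) - Real.exp (-((γ + k₂) * x))) ≤
      (1 / (γ + k₂)) * ((γ + k₂) / k₂) ^ (-(k₂ / γ)) := by
  have hgk : 0 < γ + k₂ := by linarith
  set R : ℝ := (γ + k₂) / k₂ with hR
  have hRpos : 0 < R := div_pos hgk hk
  set L : ℝ := Real.log R with hL
  set θ : ℝ := k₂ / (γ + k₂) with hθ
  have hθpos : 0 < θ := div_pos hk hgk
  have hθle : θ ≤ 1 := by rw [hθ, div_le_one hgk]; linarith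
  have hθk : θ * (γ + k₂) = k₂ := by rw [hθ]; field_simp
  have hRθ : Real.exp (-L) = θ := by
    rw [hL, Real.exp_neg, Real.exp_log hRpos, hR, hθ, inv_div]
  set xs : ℝ := L / γ with hxs
  have hγxs : γ * xs = L := by rw [hxs]; field_simp
  set B : ℝ := Real.exp (-((γ + k₂) * (x - xs))) with hB
  have hBpos : 0 < B := Real.exp_pos _
  have h1 : Real.exp (-(k₂ * x)) = Real.exp (-(k₂ * xs)) * B ^ θ := by
    rw [hB, ← Real.exp_mul, ← Real.exp_add]
    congr 1
    linear_combination (x - xs) * hθk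
  have h2 : Real.exp (-((γ + k₂) * x)) = Real.exp (-(k₂ * xs)) * θ * B := by
    rw [hB, ← hRθ, ← Real.exp_add, ← Real.exp_add]
    congr 1
    linear_combination -hγxs
  have hbern : B ^ θ ≤ 1 + θ * (B - 1) := by
    have h := rpow_one_add_le_one_add_mul_self (s := B - 1) (by linarith) hθpos.le hθle
    rwa [show (1 : ℝ) + (B - 1) = B by ring] at h
  have hE : (0:ℝ) < Real.exp (-(k₂ * xs)) := Real.exp_pos _
  have h1θ : (1 / γ) * (1 - θ) = 1 / (γ + k₂) := by
    rw [hθ]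
    field_simp
    ring
  have hmain : (1 / γ) * (Real.exp (-(k₂ * x)) - Real.exp (-((γ + k₂) * x))) ≤
      (1 / (γ + k₂)) * Real.exp (-(k₂ * xs)) := by
    rw [h1, h2, ← h1θ]
    have hstep : Real.exp (-(k₂ * xs)) * B ^ θ - Real.exp (-(k₂ * xs)) * θ * B ≤
        Real.exp (-(k₂ * xs)) * (1 - θ) := by nlinarith [hbern, hE]
    calc (1 / γ) * (Real.exp (-(k₂ * xs)) * B ^ θ - Real.exp (-(k₂ * xs)) * θ * B)
        ≤ (1 / γ) * (Real.exp (-(k₂ * xs)) * (1 - θ)) := by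
          apply mul_le_mul_of_nonneg_left hstep; positivity
      _ = (1 / γ) * (1 - θ) * Real.exp (-(k₂ * xs)) := by ring
  have hfin : Real.exp (-(k₂ * xs)) = R ^ (-(k₂ / γ)) := by
    rw [Real.rpow_def_of_pos hRpos, ← hL]
    congr 1
    rw [hxs]
    ring
  rwa [hfin] at hmain

theorem agent_hamiltonian_sup (γ σ z k₂ V u f m k₁ : ℝ)
    (hγ : 0 < γ) (hk : 0 < k₂) (hV : 0 ≤ V) :
    (∀ α : ℝ × ℝ,
      f + z * α.1 - α.1 ^ 2 / 2 + z * k₁ * m - γ * z ^ 2 * σ ^ 2 / 2 +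
          (1 / γ) * (1 - Real.exp (-γ * (u + α.2))) * Real.exp (-k₂ * α.2) * V ≤
        f + z ^ 2 / 2 - γ * σ ^ 2 * z ^ 2 / 2 + z * k₁ * m +
          (1 / (γ + k₂)) * ((γ + k₂) / k₂) ^ (-(k₂ / γ)) * Real.exp (k₂ * u) * V) ∧
    (f + z * z - z ^ 2 / 2 + z * k₁ * m - γ * z ^ 2 * σ ^ 2 / 2 +
        (1 / γ) * (1 - Real.exp (-γ * (u + ((1 / γ) * Real.log (1 + γ / k₂) - u)))) *
          Real.exp (-k₂ * ((1 / γ) * Real.log (1 + γ / k₂) - u)) * V =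
      f + z ^ 2 / 2 - γ * σ ^ 2 * z ^ 2 / 2 + z * k₁ * m +
        (1 / (γ + k₂)) * ((γ + k₂) / k₂) ^ (-(k₂ / γ)) * Real.exp (k₂ * u) * V) := by
  have hgk : 0 < γ + k₂ := by linarith
  have hRpos : (0:ℝ) < (γ + k₂) / k₂ := div_pos hgk hk
  have hReq : 1 + γ / k₂ = (γ + k₂) / k₂ := by field_simp; ring
  constructor
  · intro α
    have hquad : z * α.1 - α.1 ^ 2 / 2 ≤ z ^ 2 / 2 := by nlinarith [sq_nonneg (α.1 - z)]
    have hrw : (1 / γ) * (1 - Real.exp (-γ * (u + α.2))) * Real.exp (-k₂ * α.2) =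
        Real.exp (k₂ * u) *
          ((1 / γ) * (Real.exp (-(k₂ * (u + α.2))) - Real.exp (-((γ + k₂) * (u + α.2))))) := by
      rw [show -k₂ * α.2 = k₂ * u + -(k₂ * (u + α.2)) by ring, Real.exp_add,
        show -((γ + k₂) * (u + α.2)) = -γ * (u + α.2) + -(k₂ * (u + α.2)) by ring,
        Real.exp_add]
      ring
    have hexp : (1 / γ) * (1 - Real.exp (-γ * (u + α.2))) * Real.exp (-k₂ * α.2) ≤
        (1 / (γ + k₂)) * ((γ + k₂) / k₂) ^ (-(k₂ / γ)) * Real.exp (k₂ * u) := by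
      rw [hrw]
      calc Real.exp (k₂ * u) *
          ((1 / γ) * (Real.exp (-(k₂ * (u + α.2))) - Real.exp (-((γ + k₂) * (u + α.2)))))
          ≤ Real.exp (k₂ * u) * ((1 / (γ + k₂)) * ((γ + k₂) / k₂) ^ (-(k₂ / γ))) :=
            mul_le_mul_of_nonneg_left (key_ineq hγ hk (u + α.2)) (Real.exp_pos _).le
        _ = (1 / (γ + k₂)) * ((γ + k₂) / k₂) ^ (-(k₂ / γ)) * Real.exp (k₂ * u) := by ring
    have hVmul : (1 / γ) * (1 - Real.exp (-γ * (u + α.2))) * Real.exp (-k₂ * α.2) * V ≤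
        (1 / (γ + k₂)) * ((γ + k₂) / k₂) ^ (-(k₂ / γ)) * Real.exp (k₂ * u) * V :=
      mul_le_mul_of_nonneg_right hexp hV
    nlinarith [hVmul, hquad]
  · set L : ℝ := Real.log ((γ + k₂) / k₂) with hL
    have hγ' : γ ≠ 0 := hγ.ne'
    have hexp1 : Real.exp (-γ * (u + ((1 / γ) * Real.log (1 + γ / k₂) - u))) = k₂ / (γ + k₂) := by
      rw [hReq, ← hL]
      rw [show -γ * (u + ((1 / γ) * L - u)) = -(γ * ((1 / γ) * L)) by ring,
        show γ * ((1 / γ) * L) = L by field_simp,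
        Real.exp_neg, hL, Real.exp_log hRpos, inv_div]
    have hexp2 : Real.exp (-k₂ * ((1 / γ) * Real.log (1 + γ / k₂) - u)) =
        ((γ + k₂) / k₂) ^ (-(k₂ / γ)) * Real.exp (k₂ * u) := by
      rw [hReq, ← hL, Real.rpow_def_of_pos hRpos, ← hL, ← Real.exp_add]
      congr 1
      field_simp
      ring
    rw [hexp1, hexp2]
    have h1 : (1 / γ) * (1 - k₂ / (γ + k₂)) = 1 / (γ + k₂) := by
      field_simp
      ring
    calc f + z * z - z ^ 2 / 2 + z * k₁ * m - γ * z ^ 2 * σ ^ 2 / 2 +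
          (1 / γ) * (1 - k₂ / (γ + k₂)) *
            (((γ + k₂) / k₂) ^ (-(k₂ / γ)) * Real.exp (k₂ * u)) * V
        = f + z * z - z ^ 2 / 2 + z * k₁ * m - γ * z ^ 2 * σ ^ 2 / 2 +
          (1 / (γ + k₂)) * (((γ + k₂) / k₂) ^ (-(k₂ / γ)) * Real.exp (k₂ * u)) * V := by
          rw [h1]
      _ = f + z ^ 2 / 2 - γ * σ ^ 2 * z ^ 2 / 2 + z * k₁ * m +
          (1 / (γ + k₂)) * ((γ + k₂) / k₂) ^ (-(k₂ / γ)) * Real.exp (k₂ * u) * V := by ring
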